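/- arXiv:1201.6272 — 2 statements merged into one kernel-verified Lean document; each statement's English description precedes it below -/
import Mathlib

section
/- (Quotient sets) Let C be a bicartesian category satisfying axiom (G), and let (r₁, r₂) : R ⟶ (X, X) be an equivalence relation on X. Then there exists a morphism q : X ⟶ Q such that (i) for all elements x₁, x₂ of X, (x₁,x₂) ∈ (r₁,r₂) implies q ∘ x₁ = q ∘ x₂, and (ii) for every morphism f : X ⟶ Y such that (x₁,x₂) ∈ (r₁,r₂) implies f ∘ x₁ = f ∘ x₂ for all elements x₁, x₂, there exists a unique h : Q ⟶ Y with h ∘ q = f. If moreover C satisfies axiom (Eff), then (x₁,x₂) ∈ (r₁,r₂) if and only if q ∘ x₁ = q ∘ x₂, for all elements x₁, x₂ of X. -/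
/-!
Axiom (G) makes the category well-pointed: the equalizer of two morphisms that agree on all
elements is mono and onto, hence an isomorphism. So a morphism that identifies related elements
coequalizes `r₁, r₂`, and the coequalizer of `r₁, r₂` is the quotient. Under (Eff) the effective
map `e` factors through the coequalizer, so elements identified by the coequalizer are already
identified by `e`, i.e. related.
-/

open CategoryTheory CategoryTheory.Limits

namespace CETCS

universe v u

variable {C : Type u} [Category.{v} C] [HasTerminal C]

/-- A morphism is onto if every (global) element of the codomain is hit. -/
def Onto {A B : C} (f : A ⟶ B) : Prop :=
  ∀ y : ⊤_ C ⟶ B, ∃ x : ⊤_ C ⟶ A, x ≫ f = y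

/-- Membership `x ∈ m` of an element in (the subobject given by) a morphism. -/
def Mem {M X : C} (m : M ⟶ X) (x : ⊤_ C ⟶ X) : Prop :=
  ∃ a : ⊤_ C ⟶ M, a ≫ m = x

/-- Membership `(x, y) ∈ (r₁, r₂)` for a binary relation. -/
def Mem2 {R X Y : C} (r₁ : R ⟶ X) (r₂ : R ⟶ Y) (x : ⊤_ C ⟶ X) (y : ⊤_ C ⟶ Y) : Prop :=
  ∃ a : ⊤_ C ⟶ R, a ≫ r₁ = x ∧ a ≫ r₂ = y

/-- Membership `(x, y, z) ∈ (r₁, r₂, r₃)` for a ternary relation. -/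
def Mem3 {R X Y Z : C} (r₁ : R ⟶ X) (r₂ : R ⟶ Y) (r₃ : R ⟶ Z)
    (x : ⊤_ C ⟶ X) (y : ⊤_ C ⟶ Y) (z : ⊤_ C ⟶ Z) : Prop :=
  ∃ a : ⊤_ C ⟶ R, a ≫ r₁ = x ∧ a ≫ r₂ = y ∧ a ≫ r₃ = z

/-- Axiom (G): every morphism that is both mono and onto is an isomorphism. -/
def AxiomG (C : Type u) [Category.{v} C] [HasTerminal C] : Prop :=
  ∀ {A B : C} (f : A ⟶ B), Mono f → Onto f → IsIso f

/-- A pair of morphisms with common domain is jointly monic. -/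
def JointlyMonic2 {R X Y : C} (r₁ : R ⟶ X) (r₂ : R ⟶ Y) : Prop :=
  ∀ {U : C} (f g : U ⟶ R), f ≫ r₁ = g ≫ r₁ → f ≫ r₂ = g ≫ r₂ → f = g

/-- A triple of morphisms with common domain is jointly monic. -/
def JointlyMonic3 {R X Y Z : C} (r₁ : R ⟶ X) (r₂ : R ⟶ Y) (r₃ : R ⟶ Z) : Prop :=
  ∀ {U : C} (f g : U ⟶ R), f ≫ r₁ = g ≫ r₁ → f ≫ r₂ = g ≫ r₂ → f ≫ r₃ = g ≫ r₃ → f = g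

/-- Axiom (Fct): every morphism factors as an onto morphism followed by a mono. -/
def AxiomFct (C : Type u) [Category.{v} C] [HasTerminal C] : Prop :=
  ∀ {A B : C} (f : A ⟶ B), ∃ (I : C) (e : A ⟶ I) (i : I ⟶ B), Onto e ∧ Mono i ∧ e ≫ i = f

/-- A morphism is a cover if any mono through which it factors is an isomorphism. -/
def IsCover {A B : C} (f : A ⟶ B) : Prop :=
  ∀ {I : C} (g : A ⟶ I) (m : I ⟶ B), Mono m → g ≫ m = f → IsIso m

/-- A choice object: every onto morphism into it has a section. -/
def ChoiceObject (P : C) : Prop :=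
  ∀ {A : C} (f : A ⟶ P), Onto f → ∃ g : P ⟶ A, g ≫ f = 𝟙 P

/-- Axiom (PA): every object is covered by a choice object. -/
def AxiomPA (C : Type u) [Category.{v} C] [HasTerminal C] : Prop :=
  ∀ A : C, ∃ (P : C) (p : P ⟶ A), ChoiceObject P ∧ Onto p

/-- Axiom (Π): universal dependent products exist. -/
def AxiomPi (C : Type u) [Category.{v} C] [HasTerminal C] : Prop :=
  ∀ {Y X I : C} (g : Y ⟶ X) (f : X ⟶ I),
    ∃ (P F : C) (ev : P ⟶ Y) (π₁ : P ⟶ F) (π₂ : P ⟶ X) (φ : F ⟶ I),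
      ev ≫ g = π₂ ∧ IsPullback π₂ π₁ f φ ∧
      ∀ (i : ⊤_ C ⟶ I) {R : C} (r₁ : R ⟶ X) (r₂ : R ⟶ Y), Mono r₁ →
        (∀ (x : ⊤_ C ⟶ X) (y : ⊤_ C ⟶ Y), Mem2 r₁ r₂ x y → y ≫ g = x ∧ x ≫ f = i) →
        (∀ x : ⊤_ C ⟶ X, x ≫ f = i → ∃ y : ⊤_ C ⟶ Y, Mem2 r₁ r₂ x y) →
        ∃! s : ⊤_ C ⟶ F, s ≫ φ = i ∧
          ∀ (x : ⊤_ C ⟶ X) (y : ⊤_ C ⟶ Y), Mem3 π₁ π₂ ev s x y ↔ Mem2 r₁ r₂ x y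

/-- `i, j` form a binary coproduct (sum) diagram. -/
def IsCoproductDiagram {A B S : C} (i : A ⟶ S) (j : B ⟶ S) : Prop :=
  ∀ {T : C} (f : A ⟶ T) (g : B ⟶ T), ∃! h : S ⟶ T, i ≫ h = f ∧ j ≫ h = g

/-- Axiom (DP): each element of a sum is a member of one of its injections. -/
def AxiomDP (C : Type u) [Category.{v} C] [HasTerminal C] : Prop :=
  ∀ {A B S : C} (i : A ⟶ S) (j : B ⟶ S), IsCoproductDiagram i j →
    ∀ z : ⊤_ C ⟶ S, Mem i z ∨ Mem j z

/-- An equivalence relation: jointly monic and reflexive, symmetric, transitive on elements. -/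
def EquivRelation {R X : C} (r₁ r₂ : R ⟶ X) : Prop :=
  JointlyMonic2 r₁ r₂ ∧
  (∀ x : ⊤_ C ⟶ X, Mem2 r₁ r₂ x x) ∧
  (∀ x y : ⊤_ C ⟶ X, Mem2 r₁ r₂ x y → Mem2 r₁ r₂ y x) ∧
  (∀ x y z : ⊤_ C ⟶ X, Mem2 r₁ r₂ x y → Mem2 r₁ r₂ y z → Mem2 r₁ r₂ x z)

/-- Axiom (Eff): all equivalence relations are effective. -/
def AxiomEff (C : Type u) [Category.{v} C] [HasTerminal C] : Prop :=
  ∀ {R X : C} (r₁ r₂ : R ⟶ X), EquivRelation r₁ r₂ →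
    ∃ (E : C) (e : X ⟶ E), ∀ x₁ x₂ : ⊤_ C ⟶ X, Mem2 r₁ r₂ x₁ x₂ ↔ x₁ ≫ e = x₂ ≫ e

/-- `z : 1 ⟶ N`, `S : N ⟶ N` form a natural numbers object. -/
def IsNNO {N : C} (z : ⊤_ C ⟶ N) (S : N ⟶ N) : Prop :=
  ∀ {A : C} (b : ⊤_ C ⟶ A) (h : A ⟶ A), ∃! f : N ⟶ A, z ≫ f = b ∧ S ≫ f = f ≫ h

/-- A Π-diagram for `g : Y ⟶ X`, `f : X ⟶ I`. -/
def IsPiDiagram {Y X I P F : C} (g : Y ⟶ X) (f : X ⟶ I)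
    (ev : P ⟶ Y) (π₁ : P ⟶ F) (π₂ : P ⟶ X) (φ : F ⟶ I) : Prop :=
  ev ≫ g = π₂ ∧ IsPullback π₂ π₁ f φ

/-- A universal Π-diagram for `g : Y ⟶ X`, `f : X ⟶ I`. -/
def IsUniversalPiDiagram {Y X I P F : C} (g : Y ⟶ X) (f : X ⟶ I)
    (ev : P ⟶ Y) (π₁ : P ⟶ F) (π₂ : P ⟶ X) (φ : F ⟶ I) : Prop :=
  ∀ {P' F' : C} (ev' : P' ⟶ Y) (π₁' : P' ⟶ F') (π₂' : P' ⟶ X) (φ' : F' ⟶ I),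
    IsPiDiagram g f ev' π₁' π₂' φ' →
    ∃! n : F' ⟶ F, φ' = n ≫ φ ∧
      ∀ m : P' ⟶ P, m ≫ π₁ = π₁' ≫ n → m ≫ π₂ = π₂' → m ≫ ev = ev'

/-- Every morphism factors as a cover followed by a mono. -/
def HasCoverMonoFactorizations (C : Type u) [Category.{v} C] [HasTerminal C] : Prop :=
  ∀ {A B : C} (f : A ⟶ B), ∃ (I : C) (e : A ⟶ I) (m : I ⟶ B), IsCover e ∧ Mono m ∧ e ≫ m = f

/-- Covers are stable under pullback. -/
def CoversPullbackStable (C : Type u) [Category.{v} C] [HasTerminal C] : Prop :=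
  ∀ {P A B Z : C} (p : P ⟶ A) (q : P ⟶ B) (f : A ⟶ Z) (g : B ⟶ Z),
    IsPullback p q f g → IsCover f → IsCover q

/-- The terminal object is projective (with respect to covers). -/
def TerminalProjective (C : Type u) [Category.{v} C] [HasTerminal C] : Prop :=
  ∀ {A B : C} (e : A ⟶ B), IsCover e → ∀ h : ⊤_ C ⟶ B, ∃ k : ⊤_ C ⟶ A, k ≫ e = h

section

theorem Mem2.comp_eq_comp {R X Y : C} {r₁ r₂ : R ⟶ X} {f : X ⟶ Y} (hf : r₁ ≫ f = r₂ ≫ f)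
    {x₁ x₂ : ⊤_ C ⟶ X} (h : Mem2 r₁ r₂ x₁ x₂) : x₁ ≫ f = x₂ ≫ f := by
  obtain ⟨a, rfl, rfl⟩ := h
  simp only [Category.assoc, hf]

variable [HasEqualizers C]

theorem AxiomG.ext_of_elements (hG : AxiomG C) {A B : C} {f g : A ⟶ B}
    (h : ∀ a : ⊤_ C ⟶ A, a ≫ f = a ≫ g) : f = g := by
  have hOnto : Onto (equalizer.ι f g) := fun a => ⟨equalizer.lift a (h a), equalizer.lift_ι _ _⟩
  have := hG (equalizer.ι f g) inferInstance hOnto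
  exact (cancel_epi (equalizer.ι f g)).1 (equalizer.condition f g)

theorem AxiomG.comp_eq_comp_of_mem2 (hG : AxiomG C) {R X Y : C} {r₁ r₂ : R ⟶ X} {f : X ⟶ Y}
    (hf : ∀ x₁ x₂ : ⊤_ C ⟶ X, Mem2 r₁ r₂ x₁ x₂ → x₁ ≫ f = x₂ ≫ f) : r₁ ≫ f = r₂ ≫ f :=
  hG.ext_of_elements fun a => by
    simpa only [Category.assoc] using hf (a ≫ r₁) (a ≫ r₂) ⟨a, rfl, rfl⟩

variable [HasCoequalizers C]

theorem AxiomG.existsUnique_coequalizer_desc (hG : AxiomG C) {R X Y : C} {r₁ r₂ : R ⟶ X}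
    (f : X ⟶ Y) (hf : ∀ x₁ x₂ : ⊤_ C ⟶ X, Mem2 r₁ r₂ x₁ x₂ → x₁ ≫ f = x₂ ≫ f) :
    ∃! h : coequalizer r₁ r₂ ⟶ Y, coequalizer.π r₁ r₂ ≫ h = f := by
  have hr := hG.comp_eq_comp_of_mem2 hf
  refine ⟨coequalizer.desc f hr, coequalizer.π_desc f hr, fun h hh => ?_⟩
  exact coequalizer.hom_ext (by rw [hh, coequalizer.π_desc])

theorem AxiomG.mem2_of_comp_coequalizer_π_eq (hG : AxiomG C) (hEff : AxiomEff C) {R X : C}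
    {r₁ r₂ : R ⟶ X} (hr : EquivRelation r₁ r₂) {x₁ x₂ : ⊤_ C ⟶ X}
    (h : x₁ ≫ coequalizer.π r₁ r₂ = x₂ ≫ coequalizer.π r₁ r₂) : Mem2 r₁ r₂ x₁ x₂ := by
  obtain ⟨E, e, he⟩ := hEff r₁ r₂ hr
  have hre := hG.comp_eq_comp_of_mem2 fun y₁ y₂ => (he y₁ y₂).1
  refine (he x₁ x₂).2 ?_
  rw [← coequalizer.π_desc e hre, ← Category.assoc, h, Category.assoc]

end

theorem statement7_general {C : Type u} [Category.{v} C]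
    [HasTerminal C] [HasEqualizers C] [HasCoequalizers C]
    (hG : AxiomG C) {R X : C} (r₁ r₂ : R ⟶ X) (hr : EquivRelation r₁ r₂) :
    ∃ (Q : C) (q : X ⟶ Q),
      (∀ x₁ x₂ : ⊤_ C ⟶ X, Mem2 r₁ r₂ x₁ x₂ → x₁ ≫ q = x₂ ≫ q) ∧
      (∀ {Y : C} (f : X ⟶ Y),
        (∀ x₁ x₂ : ⊤_ C ⟶ X, Mem2 r₁ r₂ x₁ x₂ → x₁ ≫ f = x₂ ≫ f) →
        ∃! h : Q ⟶ Y, q ≫ h = f) ∧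
      (AxiomEff C → ∀ x₁ x₂ : ⊤_ C ⟶ X, Mem2 r₁ r₂ x₁ x₂ ↔ x₁ ≫ q = x₂ ≫ q) := by
  have respects : ∀ x₁ x₂ : ⊤_ C ⟶ X, Mem2 r₁ r₂ x₁ x₂ →
      x₁ ≫ coequalizer.π r₁ r₂ = x₂ ≫ coequalizer.π r₁ r₂ :=
    fun _ _ => Mem2.comp_eq_comp (coequalizer.condition r₁ r₂)
  refine ⟨coequalizer r₁ r₂, coequalizer.π r₁ r₂, respects,
    fun f hf => hG.existsUnique_coequalizer_desc f hf, fun hEff x₁ x₂ => ?_⟩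
  exact ⟨respects x₁ x₂, hG.mem2_of_comp_coequalizer_π_eq hEff hr⟩

/-- (Quotient sets) In a bicartesian category satisfying (G), every equivalence relation has a
quotient; under (Eff) the quotient map identifies exactly the related elements. -/
theorem statement7 {C : Type u} [Category.{v} C]
    [HasTerminal C] [HasBinaryProducts C] [HasEqualizers C]
    [HasInitial C] [HasBinaryCoproducts C] [HasCoequalizers C]
    (hG : AxiomG C) {R X : C} (r₁ r₂ : R ⟶ X) (hr : EquivRelation r₁ r₂) :
    ∃ (Q : C) (q : X ⟶ Q),
      (∀ x₁ x₂ : ⊤_ C ⟶ X, Mem2 r₁ r₂ x₁ x₂ → x₁ ≫ q = x₂ ≫ q) ∧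
      (∀ {Y : C} (f : X ⟶ Y),
        (∀ x₁ x₂ : ⊤_ C ⟶ X, Mem2 r₁ r₂ x₁ x₂ → x₁ ≫ f = x₂ ≫ f) →
        ∃! h : Q ⟶ Y, q ≫ h = f) ∧
      (AxiomEff C → ∀ x₁ x₂ : ⊤_ C ⟶ X, Mem2 r₁ r₂ x₁ x₂ ↔ x₁ ≫ q = x₂ ≫ q) :=
  statement7_general hG r₁ r₂ hr

end CETCS
end

section
/- (Dependent choices) Let C be a cartesian category satisfying axioms (G), (Π), (Fct) and (PA), and possessing a natural numbers object 0 : 1 ⟶ N, S : N ⟶ N. Then for any object X, any total relation (r₁, r₂) : R ⟶ (X, X) (i.e., for every element x of X there is an element y of X with (x,y) ∈ (r₁,r₂)) and any element x of X, there is a morphism f : N ⟶ X with f ∘ 0 = x and (f ∘ n, f ∘ S ∘ n) ∈ (r₁,r₂) for every element n of N. -/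
open CategoryTheory CategoryTheory.Limits

namespace CETCS

universe v u

variable {C : Type u} [Category.{v} C] [HasTerminal C]

/-!
Cover `X` by a choice object `p : P ⟶ X`. Choice objects are projective with respect to onto
morphisms, so `p` lifts along the onto morphism `r₁` to some `s : P ⟶ R`, and `s ≫ r₂` lifts back
along `p` to an endomorphism `k` of `P`. Every element `u` of `P` then has `(u ≫ p, u ≫ k ≫ p)`
in the relation, so the sequence obtained by iterating `k` from a lift of `x` with the natural
numbers object, composed with `p`, is the required one.
-/

lemma onto_fst_of_total {R X Y : C} {r₁ : R ⟶ X} {r₂ : R ⟶ Y}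
    (htot : ∀ x : ⊤_ C ⟶ X, ∃ y : ⊤_ C ⟶ Y, Mem2 r₁ r₂ x y) : Onto r₁ := fun x => by
  obtain ⟨_, a, ha, -⟩ := htot x
  exact ⟨a, ha⟩

lemma Onto.pullback_snd [HasPullbacks C] {A B P : C} {f : A ⟶ B} (hf : Onto f) (g : P ⟶ B) :
    Onto (pullback.snd f g) := fun u => by
  obtain ⟨a, ha⟩ := hf (u ≫ g)
  exact ⟨pullback.lift a u (by rw [ha]), pullback.lift_snd _ _ _⟩

lemma ChoiceObject.exists_lift [HasPullbacks C] {P A X : C} (hP : ChoiceObject P)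
    {p : A ⟶ X} (hp : Onto p) (h : P ⟶ X) : ∃ k : P ⟶ A, k ≫ p = h := by
  obtain ⟨t, ht⟩ := hP _ (hp.pullback_snd h)
  refine ⟨t ≫ pullback.fst p h, ?_⟩
  rw [Category.assoc, pullback.condition, ← Category.assoc, ht, Category.id_comp]

lemma ChoiceObject.exists_endo_of_total [HasPullbacks C] {P X R : C} (hP : ChoiceObject P)
    {p : P ⟶ X} (hp : Onto p) {r₁ r₂ : R ⟶ X}
    (htot : ∀ x : ⊤_ C ⟶ X, ∃ y : ⊤_ C ⟶ X, Mem2 r₁ r₂ x y) :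
    ∃ k : P ⟶ P, ∀ u : ⊤_ C ⟶ P, Mem2 r₁ r₂ (u ≫ p) (u ≫ k ≫ p) := by
  obtain ⟨s, hs⟩ := hP.exists_lift (onto_fst_of_total htot) p
  obtain ⟨k, hk⟩ := hP.exists_lift hp (s ≫ r₂)
  exact ⟨k, fun u => ⟨u ≫ s, by rw [Category.assoc, hs], by rw [hk, Category.assoc]⟩⟩

theorem statement10_general {C : Type u} [Category.{v} C]
    [HasTerminal C] [HasBinaryProducts C] [HasEqualizers C]
    (hPA : AxiomPA C)
    {N : C} (z : ⊤_ C ⟶ N) (S : N ⟶ N) (hN : IsNNO z S)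
    {X R : C} (r₁ r₂ : R ⟶ X)
    (htot : ∀ x : ⊤_ C ⟶ X, ∃ y : ⊤_ C ⟶ X, Mem2 r₁ r₂ x y) (x : ⊤_ C ⟶ X) :
    ∃ f : N ⟶ X, z ≫ f = x ∧ ∀ n : ⊤_ C ⟶ N, Mem2 r₁ r₂ (n ≫ f) (n ≫ S ≫ f) := by
  have := hasPullbacks_of_hasBinaryProducts_of_hasEqualizers C
  obtain ⟨P, p, hP, hp⟩ := hPA X
  obtain ⟨k, hk⟩ := hP.exists_endo_of_total hp htot
  obtain ⟨x₀, hx₀⟩ := hp x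
  obtain ⟨g, ⟨hg₀, hgS⟩, -⟩ := hN x₀ k
  refine ⟨g ≫ p, by rw [← Category.assoc, hg₀, hx₀], fun n => ?_⟩
  simpa only [← Category.assoc, hgS] using hk (n ≫ g)

/-- (Dependent choices) In a cartesian category satisfying (G), (Π), (Fct) and (PA) with an NNO,
every total relation on an object admits a choice sequence from any starting element. -/
theorem statement10 {C : Type u} [Category.{v} C]
    [HasTerminal C] [HasBinaryProducts C] [HasEqualizers C]
    (hG : AxiomG C) (hPi : AxiomPi C) (hFct : AxiomFct C) (hPA : AxiomPA C)
    {N : C} (z : ⊤_ C ⟶ N) (S : N ⟶ N) (hN : IsNNO z S)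
    {X R : C} (r₁ r₂ : R ⟶ X) (hjm : JointlyMonic2 r₁ r₂)
    (htot : ∀ x : ⊤_ C ⟶ X, ∃ y : ⊤_ C ⟶ X, Mem2 r₁ r₂ x y) (x : ⊤_ C ⟶ X) :
    ∃ f : N ⟶ X, z ≫ f = x ∧ ∀ n : ⊤_ C ⟶ N, Mem2 r₁ r₂ (n ≫ f) (n ≫ S ≫ f) :=
  statement10_general hPA z S hN r₁ r₂ htot x

end CETCS
end
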